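/- arXiv:2212.09066 — 2 statements merged into one kernel-verified Lean document; each statement's English description precedes it below -/
import Mathlib

section
/- Every finite nonempty rich word w over a finite alphabet admits a factorization w = w_p w_{p-1} ⋯ w_1 into distinct nonempty palindromes such that for each i ∈ {1, …, p}, w_i is the longest palindromic suffix of w_p w_{p-1} ⋯ w_i. -/
/-!
Appending a letter to a word creates at most one new palindromic factor, namely its longest
palindromic suffix. Hence a word of length `n` has at most `n + 1` palindromic factors, prefixes
of rich words are rich, and if `w = u s` is rich with `s` its longest palindromic suffix, then `s`
does not occur in `u` (otherwise the last letter of `w` would add no palindrome). Factorizing `u`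
recursively and appending `s` gives the factorization of `w`; `s` differs from the earlier factors
because these occur in `u`.
-/

/-- The set of palindromic factors of a word `w` (including the empty word). -/
def palFactors {α : Type*} [DecidableEq α] (w : List α) : Finset (List α) :=
  ((w.inits.flatMap List.tails).filter fun u => u.reverse = u).toFinset

/-- A word is rich if it has `|w| + 1` distinct palindromic factors
(including the empty word). -/
def Rich {α : Type*} [DecidableEq α] (w : List α) : Prop :=
  (palFactors w).card = w.length + 1

/-- `s` is the longest palindromic suffix of `u`: a nonempty palindromic suffix of
maximal length. -/
def IsLPS {α : Type*} (u s : List α) : Prop :=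
  s ≠ [] ∧ s.reverse = s ∧ s <:+ u ∧
    ∀ t : List α, t <:+ u → t.reverse = t → t.length ≤ s.length

/-- `ws = [w_p, …, w_1]` is a UPS-factorization of `w`: distinct nonempty
palindromes whose concatenation is `w`, where each `w_i` is the longest palindromic
suffix of `w_p ⋯ w_i`. -/
def UPS {α : Type*} (w : List α) (ws : List (List α)) : Prop :=
  ws ≠ [] ∧ ws.flatten = w ∧ ws.Pairwise (· ≠ ·) ∧
    ∀ i : Fin ws.length, IsLPS ((ws.take (i + 1)).flatten) ws[i]

section Factorization

variable {α : Type*}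

lemma mem_palFactors [DecidableEq α] {w s : List α} :
    s ∈ palFactors w ↔ s <:+: w ∧ s.reverse = s := by
  simp only [palFactors, List.mem_toFinset, List.mem_filter, List.mem_flatMap,
    List.mem_inits, List.mem_tails, decide_eq_true_eq]
  constructor
  · rintro ⟨⟨u, hu, hs⟩, hp⟩
    exact ⟨hs.isInfix.trans hu.isInfix, hp⟩
  · rintro ⟨⟨p, q, rfl⟩, hp⟩
    exact ⟨⟨p ++ s, List.prefix_append _ q, List.suffix_append p s⟩, hp⟩

lemma palFactors_nil [DecidableEq α] : palFactors ([] : List α) = {[]} := by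
  simp [palFactors]

lemma exists_isLPS {u : List α} (hu : u ≠ []) : ∃ s, IsLPS u s := by
  classical
  set S := (u.tails.filter fun t => t.reverse = t).toFinset
  have mem_S : ∀ t, t ∈ S ↔ t <:+ u ∧ t.reverse = t := by simp [S]
  have last_mem : [u.getLast hu] ∈ S :=
    (mem_S _).2 ⟨⟨u.dropLast, List.dropLast_append_getLast hu⟩, rfl⟩
  obtain ⟨s, hsS, hmax⟩ := S.exists_max_image List.length ⟨_, last_mem⟩
  obtain ⟨hsu, hsp⟩ := (mem_S s).1 hsS
  refine ⟨s, ?_, hsp, hsu, fun t ht htp => hmax t ((mem_S t).2 ⟨ht, htp⟩)⟩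
  rintro rfl
  simpa using hmax _ last_mem

/-- A proper palindromic suffix of the palindrome `s` is also a prefix of `s`, so it already
occurs in `u`: appending a letter creates at most one new palindromic factor. -/
lemma palFactors_concat_subset [DecidableEq α] {u s : List α} {a : α}
    (hs : IsLPS (u ++ [a]) s) : palFactors (u ++ [a]) ⊆ insert s (palFactors u) := by
  obtain ⟨hs_ne, hs_pal, hs_suf, hs_max⟩ := hs
  intro t ht
  obtain ⟨ht_inf, ht_pal⟩ := mem_palFactors.1 ht
  rw [Finset.mem_insert, mem_palFactors]
  rcases List.infix_concat_iff.1 ht_inf with ht_suf | ht_inf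
  · have hts : t <:+ s := List.suffix_of_suffix_length_le ht_suf hs_suf (hs_max t ht_suf ht_pal)
    rcases (hs_max t ht_suf ht_pal).eq_or_lt with hlen | hlen
    · exact .inl (hts.eq_of_length hlen)
    · obtain ⟨s', rfl, hs'⟩ :=
        (List.suffix_concat_iff.1 hs_suf).resolve_left hs_ne
      have htp : t <+: s' ++ [a] := by
        rw [← List.reverse_suffix, ht_pal, hs_pal]
        exact hts
      rcases List.prefix_concat_iff.1 htp with rfl | htp
      · exact absurd hlen (lt_irrefl _)
      · exact .inr ⟨htp.isInfix.trans hs'.isInfix, ht_pal⟩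
  · exact .inr ⟨ht_inf, ht_pal⟩

lemma card_palFactors_append_le [DecidableEq α] (u v : List α) :
    (palFactors (u ++ v)).card ≤ (palFactors u).card + v.length := by
  induction v using List.reverseRecOn with
  | nil => simp
  | append_singleton v a ih =>
    obtain ⟨s, hs⟩ := exists_isLPS (u := u ++ v ++ [a]) (by simp)
    calc (palFactors (u ++ (v ++ [a]))).card
        ≤ (insert s (palFactors (u ++ v))).card := by
          rw [← List.append_assoc]
          exact Finset.card_le_card (palFactors_concat_subset hs)
      _ ≤ (palFactors (u ++ v)).card + 1 := Finset.card_insert_le _ _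
      _ ≤ (palFactors u).card + (v ++ [a]).length := by simp; omega

lemma card_palFactors_le [DecidableEq α] (u : List α) : (palFactors u).card ≤ u.length + 1 := by
  simpa [palFactors_nil, add_comm] using card_palFactors_append_le [] u

lemma Rich.of_append [DecidableEq α] {u v : List α} (h : Rich (u ++ v)) : Rich u := by
  have := card_palFactors_append_le u v
  unfold Rich at h
  rw [List.length_append] at h
  exact le_antisymm (card_palFactors_le u) (by omega)

lemma Rich.not_infix_of_isLPS [DecidableEq α] {u s : List α} (h : Rich (u ++ s))
    (hs : IsLPS (u ++ s) s) : ¬ s <:+: u := by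
  intro hsu
  obtain ⟨s', a, rfl⟩ := (List.eq_nil_or_concat s).resolve_left hs.1
  rw [List.concat_eq_append] at hsu
  rw [List.concat_eq_append, ← List.append_assoc] at h hs
  have hs_old : s' ++ [a] ∈ palFactors (u ++ s') :=
    mem_palFactors.2 ⟨hsu.trans (List.prefix_append u s').isInfix, hs.2.1⟩
  have hsub : palFactors (u ++ s' ++ [a]) ⊆ palFactors (u ++ s') :=
    (palFactors_concat_subset hs).trans (Finset.insert_subset hs_old subset_rfl)
  have := (Finset.card_le_card hsub).trans (card_palFactors_le _)
  unfold Rich at h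
  simp only [List.length_append, List.length_singleton] at h this
  omega

lemma UPS.singleton {s : List α} (hs : IsLPS s s) : UPS s [s] :=
  ⟨List.cons_ne_nil _ _, List.flatten_singleton, List.pairwise_singleton _ _,
    fun ⟨0, _⟩ => by simpa using hs⟩

lemma UPS.append {u s : List α} {ws : List (List α)} (h : UPS u ws)
    (hs : IsLPS (u ++ s) s) (hnew : ¬ s <:+: u) : UPS (u ++ s) (ws ++ [s]) := by
  obtain ⟨-, hflat, hdist, hlps⟩ := h
  refine ⟨by simp, by simp [hflat], ?_, ?_⟩
  · refine List.pairwise_append.2 ⟨hdist, List.pairwise_singleton _ _, ?_⟩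
    intro v hv b hb hvb
    rw [List.mem_singleton.1 hb] at hvb
    exact hnew (hvb ▸ hflat ▸ List.infix_of_mem_flatten hv)
  · rintro ⟨i, hi⟩
    rw [List.length_append, List.length_singleton] at hi
    rcases (Nat.lt_succ_iff.1 hi).lt_or_eq with hi | rfl
    · simpa [List.take_append_of_le_length hi, List.getElem_append_left hi] using hlps ⟨i, hi⟩
    · rw [List.take_of_length_le (by simp)]
      simpa [hflat] using hs

end Factorization

/-- every finite nonempty rich word admits a UPS-factorization. -/
theorem stmt_9 {α : Type*} [DecidableEq α] (w : List α) (hw : w ≠ [])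
    (hrich : Rich w) : ∃ ws : List (List α), UPS w ws := by
  obtain ⟨s, hs⟩ := exists_isLPS hw
  obtain ⟨u, rfl⟩ := hs.2.2.1
  rcases eq_or_ne u [] with rfl | hu
  · exact ⟨[s], UPS.singleton (by simpa using hs)⟩
  · obtain ⟨ws, hws⟩ := stmt_9 u hu hrich.of_append
    exact ⟨ws ++ [s], hws.append hs (hrich.not_infix_of_isLPS hs)⟩
termination_by w.length
decreasing_by
  subst_vars
  simpa using List.length_pos_iff.2 hs.1
end

section
/- Let f be concave and non-decreasing on (0,∞) with f > 0. For a positive integer n and positive integer p, p·f(n/(2p) + 1) ≤ (p+1)·f(n/(2(p+1)) + 1). Consequently, the maximum over 1 ≤ p ≤ L of p·f(n/(2p)+1) is attained at p = L. -/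
/-!
Write `c = n / 2`. For `0 < p ≤ q` the point `c / q + 1` is the convex combination
`(p / q) • (c / p + 1) + (1 - p / q) • 1`, so concavity together with `0 ≤ f 1` gives
`(p / q) * f (c / p + 1) ≤ f (c / q + 1)`: the map `t ↦ t * f (c / t + 1)` is monotone on `(0, ∞)`.
-/

open Set

theorem ConcaveOn.mul_le_apply_add_smul {E : Type*} [AddCommGroup E] [Module ℝ E]
    {s : Set E} {f : E → ℝ} (hf : ConcaveOn ℝ s f) {x y : E} (hx : x ∈ s) (hy : y ∈ s)
    (hfy : 0 ≤ f y) {a b : ℝ} (ha : 0 ≤ a) (hb : 0 ≤ b) (hab : a + b = 1) :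
    a * f x ≤ f (a • x + b • y) := by
  have h := hf.2 hx hy ha hb hab
  simp only [smul_eq_mul] at h
  nlinarith [mul_nonneg hb hfy]

theorem ConcaveOn.monotoneOn_mul_apply_div_add_one {f : ℝ → ℝ}
    (hf : ConcaveOn ℝ (Ioi 0) f) (hf1 : 0 ≤ f 1) {c : ℝ} (hc : 0 ≤ c) :
    MonotoneOn (fun t => t * f (c / t + 1)) (Ioi 0) := by
  intro p (hp : 0 < p) q (hq : 0 < q) hpq
  have hx : c / p + 1 ∈ Ioi (0 : ℝ) := by simp only [mem_Ioi]; positivity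
  have hcomb : (p / q) • (c / p + 1) + (1 - p / q) • (1 : ℝ) = c / q + 1 := by
    simp only [smul_eq_mul]
    field_simp
    ring
  have h := hf.mul_le_apply_add_smul hx (mem_Ioi.2 one_pos) hf1 (by positivity)
    (sub_nonneg.2 ((div_le_one hq).2 hpq)) (add_sub_cancel _ _)
  rw [hcomb] at h
  calc p * f (c / p + 1) = q * (p / q * f (c / p + 1)) := by field_simp
    _ ≤ q * f (c / q + 1) := mul_le_mul_of_nonneg_left h hq.le

theorem stmt_17_general (f : ℝ → ℝ) (hconc : ConcaveOn ℝ (Set.Ioi (0 : ℝ)) f)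
    (hpos : ∀ x : ℝ, 0 < x → 0 < f x)
    (n : ℕ) :
    (∀ p : ℕ, 0 < p →
        (p : ℝ) * f ((n : ℝ) / (2 * (p : ℝ)) + 1) ≤
          ((p : ℝ) + 1) * f ((n : ℝ) / (2 * ((p : ℝ) + 1)) + 1)) ∧
      ∀ L : ℕ, 0 < L → ∀ p ∈ Finset.Icc 1 L,
        (p : ℝ) * f ((n : ℝ) / (2 * (p : ℝ)) + 1) ≤
          (L : ℝ) * f ((n : ℝ) / (2 * (L : ℝ)) + 1) := by
  have hmono := hconc.monotoneOn_mul_apply_div_add_one (hpos 1 one_pos).le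
    (by positivity : (0 : ℝ) ≤ n / 2)
  simp only [div_mul_eq_div_div]
  refine ⟨fun p hp => ?_, fun L _ p hp => ?_⟩
  · have hp' : (0 : ℝ) < p := Nat.cast_pos.2 hp
    exact hmono hp' (by simp only [mem_Ioi]; positivity) (le_add_of_nonneg_right zero_le_one)
  · obtain ⟨hp1, hpL⟩ := Finset.mem_Icc.1 hp
    have hp' : (0 : ℝ) < p := Nat.cast_pos.2 hp1
    exact hmono hp' (hp'.trans_le (Nat.cast_le.2 hpL)) (Nat.cast_le.2 hpL)

/-- for `f` concave, non-decreasing and positive on `(0,∞)`,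
`p·f(n/(2p)+1) ≤ (p+1)·f(n/(2(p+1))+1)`; consequently the maximum of
`p·f(n/(2p)+1)` over `1 ≤ p ≤ L` is attained at `p = L`. -/
theorem stmt_17 (f : ℝ → ℝ) (hconc : ConcaveOn ℝ (Set.Ioi (0 : ℝ)) f)
    (hmono : MonotoneOn f (Set.Ioi (0 : ℝ))) (hpos : ∀ x : ℝ, 0 < x → 0 < f x)
    (n : ℕ) (hn : 0 < n) :
    (∀ p : ℕ, 0 < p →
        (p : ℝ) * f ((n : ℝ) / (2 * (p : ℝ)) + 1) ≤
          ((p : ℝ) + 1) * f ((n : ℝ) / (2 * ((p : ℝ) + 1)) + 1)) ∧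
      ∀ L : ℕ, 0 < L → ∀ p ∈ Finset.Icc 1 L,
        (p : ℝ) * f ((n : ℝ) / (2 * (p : ℝ)) + 1) ≤
          (L : ℝ) * f ((n : ℝ) / (2 * (L : ℝ)) + 1) :=
  stmt_17_general f hconc hpos n
end
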